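/- arXiv:0908.1991 — 2 statements merged into one kernel-verified Lean document; each statement's English description precedes it below -/
import Mathlib

section
/- Let k be a finite field of characteristic ℓ, V a finite dimensional k-vector space, and G a subgroup of GL(V). Suppose H is a normal subgroup of G such that: V is absolutely irreducible as an H-module, H^1(H, ad⁰V) = 0, and for every irreducible H-submodule W of ad V there exist g ∈ H, α ∈ k, f ∈ W with the generalized α-eigenspace V_{g,α} one dimensional and the composite V_{g,α} ↪ V →f→ V ↠ V_{g,α} nonzero. Then the same three conditions hold with G in place of H. -/
/-!
STATEMENT 0.  `k` finite field of characteristic `ℓ`, `V` finite dimensional `k`-vector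
space, `G ≤ GL(V)`, `H ⊴ G`.  If `V` is absolutely irreducible as an `H`-module,
`H¹(H, ad⁰V) = 0`, and condition (B4) holds for `H`, then the same three conditions
hold for `G`.

Encodings:
* `GL(V)` is the unit group `(V →ₗ[k] V)ˣ`.
* `V_{g,α}` is the maximal generalized eigenspace `Module.End.maxGenEigenspace`.
* The projection `V ↠ V_{g,α}` is the projection along the canonical complement
  `range ((g - α)^(dim V))`; the composite `V_{g,α} ↪ V → V ↠ V_{g,α}` is nonzero
  iff some `v ∈ V_{g,α}` has `f v ∉ range ((g - α)^(dim V))`.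
* absolute irreducibility = irreducibility together with `End_G(V) = k` (Schur/Burnside).
* `H¹(·, ad⁰V) = 0` is stated via 1-cocycles and 1-coboundaries for the conjugation
  action on traceless endomorphisms.
-/

open Module

variable (k V : Type*)

section Defs
variable [Field k] [AddCommGroup V] [Module k V]

/-- Conjugation action of `GL(V)` on `ad V = End(V)`. -/
def conjAd (g : (V →ₗ[k] V)ˣ) (f : V →ₗ[k] V) : V →ₗ[k] V :=
  (g : V →ₗ[k] V) * f * ((g⁻¹ : (V →ₗ[k] V)ˣ) : V →ₗ[k] V)

/-- The generalized eigenspace `V_{g,α}`. -/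
def GenEig (g : V →ₗ[k] V) (α : k) : Submodule k V :=
  Module.End.maxGenEigenspace g α

/-- The canonical complement of `V_{g,α}`, the kernel of the projection `V ↠ V_{g,α}`. -/
noncomputable def CoGenEig (g : V →ₗ[k] V) (α : k) : Submodule k V :=
  LinearMap.range ((g - α • 1) ^ Module.finrank k V)

/-- `W ⊆ End(V)` is stable under conjugation by elements of `G`. -/
def ConjStable (G : Subgroup (V →ₗ[k] V)ˣ) (W : Submodule k (V →ₗ[k] V)) : Prop :=
  ∀ g ∈ G, ∀ f ∈ W, conjAd k V g f ∈ W

/-- `W` is an irreducible `G`-submodule of `ad V = End(V)` (conjugation action). -/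
def IsIrredAdSub (G : Subgroup (V →ₗ[k] V)ˣ) (W : Submodule k (V →ₗ[k] V)) : Prop :=
  W ≠ ⊥ ∧ ConjStable k V G W ∧
    ∀ W' ≤ W, ConjStable k V G W' → W' = ⊥ ∨ W' = W

/-- Condition (B2): `V` is absolutely irreducible as a `G`-module. -/
def AbsIrred (G : Subgroup (V →ₗ[k] V)ˣ) : Prop :=
  (⊥ : Submodule k V) ≠ ⊤ ∧
  (∀ U : Submodule k V, (∀ g ∈ G, ∀ v ∈ U, (g : V →ₗ[k] V) v ∈ U) → U = ⊥ ∨ U = ⊤) ∧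
  (∀ f : V →ₗ[k] V, (∀ g ∈ G, (g : V →ₗ[k] V) * f = f * (g : V →ₗ[k] V)) →
    ∃ c : k, f = c • 1)

/-- Condition (B3): `H¹(G, ad⁰V) = 0`, stated via 1-cocycles and 1-coboundaries for the
conjugation action on traceless endomorphisms. -/
def H1AdZeroVanishes (G : Subgroup (V →ₗ[k] V)ˣ) : Prop :=
  ∀ c : G → (V →ₗ[k] V),
    (∀ g : G, LinearMap.trace k V (c g) = 0) →
    (∀ g h : G, c (g * h) = c g + conjAd k V (g : (V →ₗ[k] V)ˣ) (c h)) →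
    ∃ f : V →ₗ[k] V, LinearMap.trace k V f = 0 ∧
      ∀ g : G, c g = conjAd k V (g : (V →ₗ[k] V)ˣ) f - f

/-- Condition (B4). -/
def B4 (G : Subgroup (V →ₗ[k] V)ˣ) : Prop :=
  ∀ W : Submodule k (V →ₗ[k] V), IsIrredAdSub k V G W →
    ∃ g ∈ G, ∃ α : k, ∃ f ∈ W,
      Module.finrank k (GenEig k V (g : V →ₗ[k] V) α) = 1 ∧
      ∃ v ∈ GenEig k V (g : V →ₗ[k] V) α, f v ∉ CoGenEig k V (g : V →ₗ[k] V) α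

end Defs

section Aux

variable [Field k] [AddCommGroup V] [Module k V]

lemma conjAd_mul (g₁ g₂ : (V →ₗ[k] V)ˣ) (f : V →ₗ[k] V) :
    conjAd k V (g₁ * g₂) f = conjAd k V g₁ (conjAd k V g₂ f) := by
  simp [conjAd, mul_assoc]

lemma conjAd_sub (g : (V →ₗ[k] V)ˣ) (x y : V →ₗ[k] V) :
    conjAd k V g (x - y) = conjAd k V g x - conjAd k V g y := by
  simp [conjAd, mul_sub, sub_mul]

lemma conjAd_add (g : (V →ₗ[k] V)ˣ) (x y : V →ₗ[k] V) :
    conjAd k V g (x + y) = conjAd k V g x + conjAd k V g y := by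
  simp [conjAd, mul_add, add_mul]

lemma conjAd_zero (g : (V →ₗ[k] V)ˣ) : conjAd k V g 0 = 0 := by
  simp [conjAd]

lemma comm_of_conjAd_eq (h : (V →ₗ[k] V)ˣ) (x : V →ₗ[k] V)
    (hx : conjAd k V h x = x) :
    (h : V →ₗ[k] V) * x = x * (h : V →ₗ[k] V) := by
  simp only [conjAd] at hx
  have h1 : ((h : V →ₗ[k] V) * x * ↑h⁻¹) * ↑h = x * ↑h := by rw [hx]
  rwa [mul_assoc, Units.inv_mul, mul_one] at h1

lemma trace_conjAd [FiniteDimensional k V] (g : (V →ₗ[k] V)ˣ) (x : V →ₗ[k] V) :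
    LinearMap.trace k V (conjAd k V g x) = LinearMap.trace k V x :=
  LinearMap.trace_conj (R := k) x g

/-- Any endomorphism commuting (under conjugation) with a group satisfying `AbsIrred`
is a scalar. -/
lemma scalar_of_conj_invariant (H : Subgroup (V →ₗ[k] V)ˣ) (hB2 : AbsIrred k V H)
    (x : V →ₗ[k] V) (hx : ∀ h ∈ H, conjAd k V h x = x) : ∃ c : k, x = c • 1 :=
  hB2.2.2 x fun g hg => comm_of_conjAd_eq k V g x (hx g hg)

/-- `(dim V : k) ≠ 0` follows from (B2) and (B3) for `H`. -/
lemma finrank_ne_zero_in_base [FiniteDimensional k V]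
    (H : Subgroup (V →ₗ[k] V)ˣ) (hB2 : AbsIrred k V H)
    (hB3 : H1AdZeroVanishes k V H) : (Module.finrank k V : k) ≠ 0 := by
  intro hn
  have hVnt : Nontrivial V := by
    by_contra hV
    rw [not_nontrivial_iff_subsingleton] at hV
    exact hB2.1 (Subsingleton.elim _ _)
  have hpos : 0 < Module.finrank k V := Module.finrank_pos
  set n := Module.finrank k V with hdim
  let b : Basis (Fin n) k V := Module.finBasis k V
  let i0 : Fin n := ⟨0, hpos⟩
  let f₀ : V →ₗ[k] V := Matrix.toLin b b (Matrix.single i0 i0 1)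
  have htr : LinearMap.trace k V f₀ = 1 := by
    rw [LinearMap.trace_eq_matrix_trace k b, LinearMap.toMatrix_toLin]
    simp [Matrix.trace, Matrix.single, Matrix.diag]
  -- the coboundary (in ad V) of f₀ is a cocycle valued in ad⁰ V
  obtain ⟨f, hf0, hf⟩ := hB3 (fun h => conjAd k V ↑h f₀ - f₀)
    (fun h => by rw [map_sub, trace_conjAd, sub_self])
    (fun g h => by
      simp only [Subgroup.coe_mul, conjAd_mul, conjAd_sub]
      abel)
  -- then f₀ - f is H-invariant, hence scalar, contradicting trace 1 vs ℓ ∣ n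
  have hinv : ∀ h ∈ H, conjAd k V h (f₀ - f) = f₀ - f := by
    intro h hh
    have h1 := hf ⟨h, hh⟩
    rw [conjAd_sub]
    calc conjAd k V h f₀ - conjAd k V h f
        = (conjAd k V h f₀ - f₀) - (conjAd k V h f - f) + (f₀ - f) := by abel
      _ = f₀ - f := by rw [← h1]; abel
  obtain ⟨c, hc⟩ := scalar_of_conj_invariant k V H hB2 _ hinv
  have : (1 : k) = 0 := by
    have h2 : LinearMap.trace k V (f₀ - f) = 1 := by rw [map_sub, htr, hf0, sub_zero]
    rw [hc, map_smul, LinearMap.trace_one, smul_eq_mul, ← hdim, hn, mul_zero] at h2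
    exact h2.symm
  exact one_ne_zero this

/-- Every nonzero conjugation-stable submodule contains an irreducible one. -/
lemma exists_irred_sub [FiniteDimensional k V] (H : Subgroup (V →ₗ[k] V)ˣ) :
    ∀ W : Submodule k (V →ₗ[k] V), W ≠ ⊥ → ConjStable k V H W →
      ∃ W', W' ≤ W ∧ IsIrredAdSub k V H W' := by
  suffices h : ∀ (m : ℕ) (W : Submodule k (V →ₗ[k] V)), Module.finrank k W = m →
      W ≠ ⊥ → ConjStable k V H W → ∃ W', W' ≤ W ∧ IsIrredAdSub k V H W' by
    intro W hW hst
    exact h _ W rfl hW hst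
  intro m
  induction m using Nat.strong_induction_on with
  | _ m ih =>
    intro W hm hW hst
    by_cases hirr : ∀ W' ≤ W, ConjStable k V H W' → W' = ⊥ ∨ W' = W
    · exact ⟨W, le_refl _, hW, hst, hirr⟩
    · push_neg at hirr
      obtain ⟨W', hle, hst', hne⟩ := hirr
      obtain ⟨hne1, hne2⟩ := hne
      have hlt : Module.finrank k W' < m := by
        rw [← hm]
        exact Submodule.finrank_lt_finrank_of_lt (lt_of_le_of_ne hle hne2)
      obtain ⟨W'', h1, h2⟩ := ih _ hlt W' rfl hne1 hst'
      exact ⟨W'', h1.trans hle, h2⟩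

end Aux


theorem stmt0 {ℓ : ℕ} [Fact ℓ.Prime]
    [Field k] [Finite k] [CharP k ℓ]
    [AddCommGroup V] [Module k V] [FiniteDimensional k V]
    (G H : Subgroup (V →ₗ[k] V)ˣ) (hHG : H ≤ G)
    (hnormal : ∀ g ∈ G, ∀ h ∈ H, g * h * g⁻¹ ∈ H)
    (hB2 : AbsIrred k V H) (hB3 : H1AdZeroVanishes k V H) (hB4 : B4 k V H) :
    AbsIrred k V G ∧ H1AdZeroVanishes k V G ∧ B4 k V G := by
  have hnk : (Module.finrank k V : k) ≠ 0 := finrank_ne_zero_in_base k V H hB2 hB3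
  refine ⟨⟨hB2.1, ?_, ?_⟩, ?_, ?_⟩
  · -- irreducibility over G
    intro U hU
    exact hB2.2.1 U fun g hg => hU g (hHG hg)
  · -- Schur for G
    intro f hf
    exact hB2.2.2 f fun g hg => hf g (hHG hg)
  · -- H¹(G, ad⁰V) = 0
    intro c htr hcoc
    -- restrict the cocycle to H and solve there
    obtain ⟨f, hf0, hf⟩ := hB3 (fun h => c (Subgroup.inclusion hHG h))
      (fun h => htr _)
      (fun g h => by
        have h1 := hcoc (Subgroup.inclusion hHG g) (Subgroup.inclusion hHG h)
        rw [← map_mul] at h1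
        simpa [Subgroup.coe_inclusion] using h1)
    refine ⟨f, hf0, ?_⟩
    -- the corrected cocycle
    set c' : G → (V →ₗ[k] V) := fun a => c a - (conjAd k V (↑a) f - f) with hc'
    have hcoc' : ∀ a b : G, c' (a * b) = c' a + conjAd k V (↑a) (c' b) := by
      intro a b
      simp only [hc', hcoc a b, Subgroup.coe_mul, conjAd_mul, conjAd_sub, conjAd_add]
      abel
    have hH0 : ∀ b : G, (b : (V →ₗ[k] V)ˣ) ∈ H → c' b = 0 := by
      intro b hb
      have h1 := hf ⟨(b : (V →ₗ[k] V)ˣ), hb⟩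
      have h2 : Subgroup.inclusion hHG ⟨(b : (V →ₗ[k] V)ˣ), hb⟩ = b := by
        apply Subtype.ext; rfl
      rw [h2] at h1
      simp only [hc', h1]
      abel
    intro g
    -- c' g is H-invariant by normality
    have hinv : ∀ h ∈ H, conjAd k V h (c' g) = c' g := by
      intro h hh
      have h'mem : (↑g)⁻¹ * h * ↑g ∈ H := by
        have := hnormal ((↑g)⁻¹) (G.inv_mem g.2) h hh
        rwa [inv_inv] at this
      set a : G := ⟨(↑g)⁻¹ * h * ↑g, hHG h'mem⟩ with ha
      set b : G := ⟨h, hHG hh⟩ with hb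
      have hmul : g * a = b * g := by
        apply Subtype.ext
        simp [ha, hb, mul_assoc]
      have e1 : c' (g * a) = c' g := by
        rw [hcoc' g a, hH0 a h'mem, conjAd_zero, add_zero]
      have e2 : c' (b * g) = conjAd k V h (c' g) := by
        rw [hcoc' b g, hH0 b hh, zero_add]
      rw [← e2, ← hmul, e1]
    obtain ⟨μ, hμ⟩ := scalar_of_conj_invariant k V H hB2 _ hinv
    have htr' : LinearMap.trace k V (c' g) = 0 := by
      simp only [hc', map_sub, htr g, trace_conjAd, sub_self, sub_zero]
    rw [hμ, map_smul, LinearMap.trace_one, smul_eq_mul] at htr'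
    have hμ0 : μ = 0 := by
      rcases mul_eq_zero.mp htr' with h | h
      · exact h
      · exact absurd h hnk
    have : c' g = 0 := by rw [hμ, hμ0, zero_smul]
    have := sub_eq_zero.mp this
    exact this
  · -- B4 for G
    intro W hW
    obtain ⟨W', hle, hW'⟩ := exists_irred_sub k V H W hW.1
      (fun g hg x hx => hW.2.1 g (hHG hg) x hx)
    obtain ⟨g, hg, α, f, hfW, h1, v, hv, hnin⟩ := hB4 W' hW'
    exact ⟨g, hHG hg, α, f, hle hfW, h1, v, hv, hnin⟩
end

section
/- Let k be a finite field of characteristic ℓ, V a finite dimensional k-vector space, and G ≤ GL(V) satisfying condition (B4). Let S be the set of pairs (g,α) ∈ G × k^× such that the generalized eigenspace V_{g,α} is one dimensional. Then the natural G-equivariant map Φ : End(V) → ⊕_{(g,α)∈S} End(V_{g,α}), given componentwise by f ↦ (projection onto V_{g,α}) ∘ f ∘ (inclusion of V_{g,α}), is injective. -/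
/-!
STATEMENT 5.  `G ≤ GL(V)` satisfying (B4) (with eigenvalues in `k^×`, as in the paper's
set `S`).  Let `S` be the set of pairs `(g,α) ∈ G × k^×` with `V_{g,α}` one dimensional.
Then the `G`-equivariant map `Φ : End(V) → ⊕_{(g,α) ∈ S} End(V_{g,α})`,
`f ↦ (proj ∘ f ∘ incl)`, is injective.  The component of `Φ f` at `(g,α)` vanishes
iff `f` maps `V_{g,α}` into the canonical complement `range ((g-α)^(dim V))`
(the kernel of the projection), so injectivity is stated as:  any `f` all of whose
components vanish is `0`.
-/

open Module

variable (k V : Type*)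

/-- Condition (B4), with eigenvalues taken in `k^×` (the paper's set `S`). -/
def B4units {k V : Type*} [Field k] [AddCommGroup V] [Module k V]
    (G : Subgroup (V →ₗ[k] V)ˣ) : Prop :=
  ∀ W : Submodule k (V →ₗ[k] V), IsIrredAdSub k V G W →
    ∃ g ∈ G, ∃ α : kˣ, ∃ f ∈ W,
      Module.finrank k (GenEig k V (g : V →ₗ[k] V) (α : k)) = 1 ∧
      ∃ v ∈ GenEig k V (g : V →ₗ[k] V) (α : k), f v ∉ CoGenEig k V (g : V →ₗ[k] V) (α : k)

section AuxLemmas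

variable {k V : Type*} [Field k] [AddCommGroup V] [Module k V]

/-- A unit of `End(V)` as a linear equivalence. -/
noncomputable def unitEquiv (h : (V →ₗ[k] V)ˣ) : V ≃ₗ[k] V :=
  LinearEquiv.ofLinear (h : V →ₗ[k] V) ((h⁻¹ : (V →ₗ[k] V)ˣ) : V →ₗ[k] V)
    (by rw [← Module.End.mul_eq_comp, ← Units.val_mul, mul_inv_cancel, Units.val_one,
          Module.End.one_eq_id])
    (by rw [← Module.End.mul_eq_comp, ← Units.val_mul, inv_mul_cancel, Units.val_one,
          Module.End.one_eq_id])

lemma unit_inv_apply (h : (V →ₗ[k] V)ˣ) (x : V) :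
    ((h⁻¹ : (V →ₗ[k] V)ˣ) : V →ₗ[k] V) ((h : V →ₗ[k] V) x) = x := by
  have h1 : ((h⁻¹ : (V →ₗ[k] V)ˣ) : V →ₗ[k] V) * (h : V →ₗ[k] V) = 1 := by
    rw [← Units.val_mul, inv_mul_cancel, Units.val_one]
  calc ((h⁻¹ : (V →ₗ[k] V)ˣ) : V →ₗ[k] V) ((h : V →ₗ[k] V) x)
      = (((h⁻¹ : (V →ₗ[k] V)ˣ) : V →ₗ[k] V) * (h : V →ₗ[k] V)) x := rfl
    _ = x := by rw [h1]; rfl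

lemma unit_apply_inv (h : (V →ₗ[k] V)ˣ) (x : V) :
    (h : V →ₗ[k] V) (((h⁻¹ : (V →ₗ[k] V)ˣ) : V →ₗ[k] V) x) = x := by
  have h1 : (h : V →ₗ[k] V) * ((h⁻¹ : (V →ₗ[k] V)ˣ) : V →ₗ[k] V) = 1 := by
    rw [← Units.val_mul, mul_inv_cancel, Units.val_one]
  calc (h : V →ₗ[k] V) (((h⁻¹ : (V →ₗ[k] V)ˣ) : V →ₗ[k] V) x)
      = ((h : V →ₗ[k] V) * ((h⁻¹ : (V →ₗ[k] V)ˣ) : V →ₗ[k] V)) x := rfl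
    _ = x := by rw [h1]; rfl

lemma unit_apply_eq_zero {h : (V →ₗ[k] V)ˣ} {x : V} :
    (h : V →ₗ[k] V) x = 0 ↔ x = 0 := by
  constructor
  · intro hx
    have := congrArg (fun z => ((h⁻¹ : (V →ₗ[k] V)ˣ) : V →ₗ[k] V) z) hx
    simpa [unit_inv_apply] using this
  · rintro rfl; exact map_zero _

lemma units_conj_pow (h : (V →ₗ[k] V)ˣ) (A : V →ₗ[k] V) (n : ℕ) :
    ((h : V →ₗ[k] V) * A * ((h⁻¹ : (V →ₗ[k] V)ˣ) : V →ₗ[k] V)) ^ n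
      = (h : V →ₗ[k] V) * A ^ n * ((h⁻¹ : (V →ₗ[k] V)ˣ) : V →ₗ[k] V) := by
  induction n with
  | zero =>
    rw [pow_zero, pow_zero, mul_one, ← Units.val_mul, mul_inv_cancel, Units.val_one]
  | succ n ih =>
    rw [pow_succ, pow_succ, ih]
    have h1 : ((h⁻¹ : (V →ₗ[k] V)ˣ) : V →ₗ[k] V) * (h : V →ₗ[k] V) = 1 := by
      rw [← Units.val_mul, inv_mul_cancel, Units.val_one]
    calc ((h : V →ₗ[k] V) * A ^ n * ((h⁻¹ : (V →ₗ[k] V)ˣ) : V →ₗ[k] V)) *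
          ((h : V →ₗ[k] V) * A * ((h⁻¹ : (V →ₗ[k] V)ˣ) : V →ₗ[k] V))
        = (h : V →ₗ[k] V) * (A ^ n * ((((h⁻¹ : (V →ₗ[k] V)ˣ) : V →ₗ[k] V) * (h : V →ₗ[k] V)) *
            (A * ((h⁻¹ : (V →ₗ[k] V)ˣ) : V →ₗ[k] V)))) := by simp only [mul_assoc]
      _ = (h : V →ₗ[k] V) * (A ^ n * A) * ((h⁻¹ : (V →ₗ[k] V)ˣ) : V →ₗ[k] V) := by
          rw [h1, one_mul]; simp only [mul_assoc]

lemma conj_sub_smul (h : (V →ₗ[k] V)ˣ) (A : V →ₗ[k] V) (α : k) :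
    (h : V →ₗ[k] V) * A * ((h⁻¹ : (V →ₗ[k] V)ˣ) : V →ₗ[k] V) - α • 1
      = (h : V →ₗ[k] V) * (A - α • 1) * ((h⁻¹ : (V →ₗ[k] V)ˣ) : V →ₗ[k] V) := by
  have h1 : (h : V →ₗ[k] V) * (α • 1) * ((h⁻¹ : (V →ₗ[k] V)ˣ) : V →ₗ[k] V) = α • 1 := by
    rw [mul_smul_comm, mul_one, smul_mul_assoc, ← Units.val_mul, mul_inv_cancel, Units.val_one]
  rw [mul_sub, sub_mul, h1]

lemma genEig_conj (h : (V →ₗ[k] V)ˣ) (g : V →ₗ[k] V) (α : k) :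
    GenEig k V ((h : V →ₗ[k] V) * g * ((h⁻¹ : (V →ₗ[k] V)ˣ) : V →ₗ[k] V)) α
      = (GenEig k V g α).map (h : V →ₗ[k] V) := by
  ext x
  rw [Submodule.mem_map]
  simp only [GenEig, Module.End.mem_maxGenEigenspace]
  constructor
  · rintro ⟨n, hn⟩
    refine ⟨((h⁻¹ : (V →ₗ[k] V)ˣ) : V →ₗ[k] V) x, ⟨n, ?_⟩, unit_apply_inv h x⟩
    rw [conj_sub_smul, units_conj_pow] at hn
    have hhn : (h : V →ₗ[k] V) (((g - α • 1) ^ n) (((h⁻¹ : (V →ₗ[k] V)ˣ) : V →ₗ[k] V) x)) = 0 := by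
      simpa [Module.End.mul_apply] using hn
    exact unit_apply_eq_zero.mp hhn
  · rintro ⟨y, ⟨n, hn⟩, rfl⟩
    refine ⟨n, ?_⟩
    rw [conj_sub_smul, units_conj_pow]
    simp [Module.End.mul_apply, unit_inv_apply, hn]

lemma coGenEig_conj [FiniteDimensional k V] (h : (V →ₗ[k] V)ˣ) (g : V →ₗ[k] V) (α : k) :
    CoGenEig k V ((h : V →ₗ[k] V) * g * ((h⁻¹ : (V →ₗ[k] V)ˣ) : V →ₗ[k] V)) α
      = (CoGenEig k V g α).map (h : V →ₗ[k] V) := by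
  unfold CoGenEig
  rw [conj_sub_smul, units_conj_pow]
  have hr : LinearMap.range ((h⁻¹ : (V →ₗ[k] V)ˣ) : V →ₗ[k] V) = ⊤ := by
    rw [LinearMap.range_eq_top]
    exact fun y => ⟨(h : V →ₗ[k] V) y, unit_inv_apply h y⟩
  rw [Module.End.mul_eq_comp, LinearMap.range_comp, hr, Submodule.map_top,
    Module.End.mul_eq_comp, LinearMap.range_comp]

lemma finrank_genEig_conj [FiniteDimensional k V] (h : (V →ₗ[k] V)ˣ) (g : V →ₗ[k] V) (α : k) :
    Module.finrank k (GenEig k V ((h : V →ₗ[k] V) * g * ((h⁻¹ : (V →ₗ[k] V)ˣ) : V →ₗ[k] V)) α)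
      = Module.finrank k (GenEig k V g α) := by
  rw [genEig_conj]
  exact LinearEquiv.finrank_map_eq (unitEquiv h) _

end AuxLemmas

section KernelModule

variable {k V : Type*} [Field k] [AddCommGroup V] [Module k V]

/-- The kernel of `Φ` as a submodule of `End(V)`. -/
def Kmod (G : Subgroup (V →ₗ[k] V)ˣ) : Submodule k (V →ₗ[k] V) where
  carrier := {f | ∀ g ∈ G, ∀ α : kˣ,
    Module.finrank k (GenEig k V (g : V →ₗ[k] V) (α : k)) = 1 →
    ∀ v ∈ GenEig k V (g : V →ₗ[k] V) (α : k), f v ∈ CoGenEig k V (g : V →ₗ[k] V) (α : k)}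
  add_mem' := by
    intro a b ha hb g hG α hα v hv
    simpa [LinearMap.add_apply] using
      (CoGenEig k V (g : V →ₗ[k] V) (α : k)).add_mem (ha g hG α hα v hv) (hb g hG α hα v hv)
  zero_mem' := by
    intro g hG α hα v hv
    simp only [LinearMap.zero_apply]; exact (CoGenEig k V (g : V →ₗ[k] V) (α : k)).zero_mem
  smul_mem' := by
    intro c a ha g hG α hα v hv
    simpa [LinearMap.smul_apply] using
      (CoGenEig k V (g : V →ₗ[k] V) (α : k)).smul_mem c (ha g hG α hα v hv)

lemma mem_Kmod {G : Subgroup (V →ₗ[k] V)ˣ} {f : V →ₗ[k] V} :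
    f ∈ Kmod G ↔ ∀ g ∈ G, ∀ α : kˣ,
      Module.finrank k (GenEig k V (g : V →ₗ[k] V) (α : k)) = 1 →
      ∀ v ∈ GenEig k V (g : V →ₗ[k] V) (α : k),
        f v ∈ CoGenEig k V (g : V →ₗ[k] V) (α : k) := Iff.rfl

lemma Kmod_conjStable [FiniteDimensional k V] (G : Subgroup (V →ₗ[k] V)ˣ) :
    ConjStable k V G (Kmod G) := by
  intro h hh f hf g hG α hα v hv
  set g' : (V →ₗ[k] V)ˣ := h⁻¹ * g * h with hg'
  have hg'G : g' ∈ G := G.mul_mem (G.mul_mem (G.inv_mem hh) hG) hh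
  have hgg : (g : V →ₗ[k] V)
      = (h : V →ₗ[k] V) * (g' : V →ₗ[k] V) * ((h⁻¹ : (V →ₗ[k] V)ˣ) : V →ₗ[k] V) := by
    have hu : g = h * g' * h⁻¹ := by rw [hg']; group
    rw [hu, Units.val_mul, Units.val_mul]
  rw [hgg] at hv hα ⊢
  rw [genEig_conj] at hv
  rw [finrank_genEig_conj] at hα
  obtain ⟨w, hw, rfl⟩ := hv
  have hfw : f w ∈ CoGenEig k V (g' : V →ₗ[k] V) (α : k) := hf g' hg'G α hα w hw
  have hw' : ((h⁻¹ : (V →ₗ[k] V)ˣ) : V →ₗ[k] V) ((h : V →ₗ[k] V) w) = w :=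
    unit_inv_apply h w
  have hconj : conjAd k V h f ((h : V →ₗ[k] V) w) = (h : V →ₗ[k] V) (f w) := by
    simp [conjAd, Module.End.mul_apply, hw']
  rw [coGenEig_conj, hconj]
  exact Submodule.mem_map_of_mem hfw

/-- Every nonzero conjugation-stable submodule of `End(V)` contains an irreducible
`G`-submodule. -/
lemma exists_irred_le [FiniteDimensional k V] (G : Subgroup (V →ₗ[k] V)ˣ) :
    ∀ n : ℕ, ∀ K : Submodule k (V →ₗ[k] V), Module.finrank k K ≤ n →
      ConjStable k V G K → K ≠ ⊥ → ∃ W ≤ K, IsIrredAdSub k V G W := by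
  intro n
  induction n with
  | zero =>
    intro K hK _ hne
    exact absurd (Submodule.finrank_eq_zero.mp (Nat.le_zero.mp hK)) hne
  | succ n ih =>
    intro K hK hst hne
    by_cases hirr : ∀ W' ≤ K, ConjStable k V G W' → W' = ⊥ ∨ W' = K
    · exact ⟨K, le_rfl, hne, hst, hirr⟩
    · push_neg at hirr
      obtain ⟨W', hle, hst', hne'⟩ := hirr
      obtain ⟨hne1, hne2⟩ := hne'
      have hlt : Module.finrank k W' < Module.finrank k K :=
        Submodule.finrank_lt_finrank_of_lt (hle.lt_of_ne hne2)
      obtain ⟨W, hWle, hW⟩ := ih W' (by omega) hst' hne1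
      exact ⟨W, hWle.trans hle, hW⟩

end KernelModule


theorem stmt5 {ℓ : ℕ} [Fact ℓ.Prime]
    [Field k] [Finite k] [CharP k ℓ]
    [AddCommGroup V] [Module k V] [FiniteDimensional k V]
    (G : Subgroup (V →ₗ[k] V)ˣ)
    (hB4 : B4units G) :
    -- `Φ` is injective: if all components of `Φ f` vanish then `f = 0`.
    ∀ f : V →ₗ[k] V,
      (∀ g ∈ G, ∀ α : kˣ,
        Module.finrank k (GenEig k V (g : V →ₗ[k] V) (α : k)) = 1 →
        ∀ v ∈ GenEig k V (g : V →ₗ[k] V) (α : k),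
          f v ∈ CoGenEig k V (g : V →ₗ[k] V) (α : k)) →
      f = 0 := by
  intro f hf
  by_contra hfne
  have hfK : f ∈ Kmod G := hf
  have hKne : Kmod G ≠ ⊥ := by
    intro hb
    rw [hb, Submodule.mem_bot] at hfK
    exact hfne hfK
  obtain ⟨W, hWle, hWirr⟩ :=
    exists_irred_le G (Module.finrank k (Kmod G)) (Kmod G) le_rfl (Kmod_conjStable G) hKne
  obtain ⟨g, hG, α, f', hf'W, hrank, v, hv, hnot⟩ := hB4 W hWirr
  exact hnot (hWle hf'W g hG α hrank v hv)
end
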